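/- arXiv:2408.16920 — 2 statements merged into one kernel-verified Lean document; each statement's English description precedes it below -/
import Mathlib

section
/- Let A ∈ ℝ^{n×n} be symmetric with eigenvalues in (0,2), b ∈ ℝ^n, f(x) = -(Ax - b), and ‖v‖_{A^{-1}} = √(vᵀA^{-1}v). Fix x̄ ∈ ℝ^n and a nonzero direction d ∈ ℝ^n. For any β ∈ ℝ, set x = x̄ + βd, β̂ = ⟨d, g(x) - x̄⟩/‖d‖² where g(x) = x + f(x), and x̂ = x̄ + β̂ d. Then ‖f(x̂)‖_{A^{-1}} ≤ ‖f(x)‖_{A^{-1}}. -/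
open Matrix

noncomputable def enormAinv {n : ℕ} (A : Matrix (Fin n) (Fin n) ℝ) (v : Fin n → ℝ) : ℝ :=
  Real.sqrt (v ⬝ᵥ A⁻¹.mulVec v)

lemma quad_le {n : ℕ} {A : Matrix (Fin n) (Fin n) ℝ} (hA : A.IsHermitian)
    (hle : ∀ i, hA.eigenvalues i ≤ 2) (d : Fin n → ℝ) :
    d ⬝ᵥ A.mulVec d ≤ 2 * (d ⬝ᵥ d) := by
  have hps : ((2:ℝ) • (1 : Matrix (Fin n) (Fin n) ℝ) - A).PosSemidef := by
    have hU : (hA.eigenvectorUnitary : Matrix (Fin n) (Fin n) ℝ) *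
        star (hA.eigenvectorUnitary : Matrix (Fin n) (Fin n) ℝ) = 1 :=
      (Matrix.mem_unitaryGroup_iff).mp hA.eigenvectorUnitary.2
    have hdecomp : (2:ℝ) • (1 : Matrix (Fin n) (Fin n) ℝ) - A =
        (hA.eigenvectorUnitary : Matrix (Fin n) (Fin n) ℝ) *
        (diagonal (fun i => 2 - hA.eigenvalues i)) *
        star (hA.eigenvectorUnitary : Matrix (Fin n) (Fin n) ℝ) := by
      conv_lhs => rw [hA.spectral_theorem]
      have : (diagonal (fun i => 2 - hA.eigenvalues i)) =
          (2:ℝ) • (1 : Matrix (Fin n) (Fin n) ℝ) - diagonal (RCLike.ofReal ∘ hA.eigenvalues) := by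
        rw [← diagonal_one, ← diagonal_smul, diagonal_sub]
        funext i
        simp
      rw [this, Matrix.mul_sub, Matrix.sub_mul]
      congr 1
      rw [Matrix.mul_smul, Matrix.smul_mul, mul_one, hU]
    rw [hdecomp]
    refine (Matrix.posSemidef_diagonal_iff.mpr ?_).mul_mul_conjTranspose_same _
    intro i
    linarith [hle i]
  have h0 := hps.re_dotProduct_nonneg d
  simp only [RCLike.star_def, starRingEnd_apply, RCLike.re_to_real] at h0
  have : star d ⬝ᵥ ((2:ℝ) • (1 : Matrix (Fin n) (Fin n) ℝ) - A).mulVec d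
      = 2 * (d ⬝ᵥ d) - d ⬝ᵥ A.mulVec d := by
    simp [Matrix.sub_mulVec, Matrix.smul_mulVec, dotProduct_sub, dotProduct_smul,
      smul_eq_mul, mul_comm]
  rw [this] at h0
  linarith

theorem stmt_8 {n : ℕ} (A : Matrix (Fin n) (Fin n) ℝ) (hA : A.IsHermitian)
    (hev : ∀ i, hA.eigenvalues i ∈ Set.Ioo (0:ℝ) 2)
    (b : Fin n → ℝ)
    (f g : (Fin n → ℝ) → (Fin n → ℝ))
    (hf : ∀ x, f x = -(A.mulVec x - b))
    (hg : ∀ x, g x = x + f x)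
    (xb d : Fin n → ℝ) (hd : d ≠ 0) (β : ℝ)
    (x : Fin n → ℝ) (hx : x = xb + β • d)
    (βhat : ℝ) (hβ : βhat = (d ⬝ᵥ (g x - xb)) / (d ⬝ᵥ d))
    (xhat : Fin n → ℝ) (hxhat : xhat = xb + βhat • d) :
    enormAinv A (f xhat) ≤ enormAinv A (f x) := by
  -- A is invertible
  have hdet : IsUnit A.det := by
    rw [hA.det_eq_prod_eigenvalues]
    refine (Finset.prod_pos fun i _ => (hev i).1).ne'.isUnit
  have hAiA : A⁻¹ * A = 1 := nonsing_inv_mul A hdet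
  have hAAi : A * A⁻¹ = 1 := mul_nonsing_inv A hdet
  have hAT : Aᵀ = A := hA
  -- positivity of ‖d‖²
  have hdd : 0 < d ⬝ᵥ d :=
    lt_of_le_of_ne (Finset.sum_nonneg fun i _ => mul_self_nonneg (d i))
      (fun h => hd (dotProduct_self_eq_zero.mp h.symm))
  set r : Fin n → ℝ := f x with hr
  set s : ℝ := d ⬝ᵥ r with hs
  set c : ℝ := s / (d ⬝ᵥ d) with hc
  -- βhat = β + c
  have hbh : βhat = β + c := by
    rw [hβ, hg, hx, hc, hs, hr, hf, hx]
    have : (xb + β • d) + -(A.mulVec (xb + β • d) - b) - xb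
        = β • d + -(A.mulVec (xb + β • d) - b) := by abel
    rw [this, dotProduct_add, dotProduct_smul, smul_eq_mul, add_div,
      mul_div_assoc, div_self hdd.ne', mul_one, hf]
  -- f xhat = r - c • A.mulVec d
  have hfxhat : f xhat = r - c • A.mulVec d := by
    rw [hr, hf, hf, hxhat, hx, hbh]
    funext i
    simp [Matrix.mulVec_add, Matrix.mulVec_smul, add_smul]
    ring
  -- quadratic form expansion
  have hAid : A⁻¹.mulVec (A.mulVec d) = d := by
    rw [Matrix.mulVec_mulVec, hAiA, Matrix.one_mulVec]
  have hAdAir : ∀ w : Fin n → ℝ, (A.mulVec d) ⬝ᵥ A⁻¹.mulVec w = d ⬝ᵥ w := by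
    intro w
    rw [Matrix.dotProduct_mulVec, ← Matrix.mulVec_transpose,
      Matrix.transpose_nonsing_inv, hAT, hAid]
  have key : (f xhat) ⬝ᵥ A⁻¹.mulVec (f xhat)
      = r ⬝ᵥ A⁻¹.mulVec r - 2 * c * s + c^2 * (d ⬝ᵥ A.mulVec d) := by
    rw [hfxhat]
    rw [Matrix.mulVec_sub, Matrix.mulVec_smul, sub_dotProduct, dotProduct_sub,
      dotProduct_sub, dotProduct_smul, smul_dotProduct, smul_dotProduct,
      dotProduct_smul, hAid, hAdAir]
    have h1 : r ⬝ᵥ d = s := dotProduct_comm r d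
    have h2 : (A.mulVec d) ⬝ᵥ d = d ⬝ᵥ A.mulVec d := dotProduct_comm _ _
    simp only [smul_eq_mul, h1, h2]
    ring
  -- the correction term is nonpositive
  have hq : d ⬝ᵥ A.mulVec d ≤ 2 * (d ⬝ᵥ d) := quad_le hA (fun i => (hev i).2.le) d
  have hcorr : -(2 * c * s) + c^2 * (d ⬝ᵥ A.mulVec d) ≤ 0 := by
    have hc2 : c^2 * (d ⬝ᵥ A.mulVec d) ≤ c^2 * (2 * (d ⬝ᵥ d)) :=
      mul_le_mul_of_nonneg_left hq (sq_nonneg c)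
    have hcs : c * (d ⬝ᵥ d) = s := div_mul_cancel₀ s hdd.ne'
    have : c^2 * (2 * (d ⬝ᵥ d)) = 2 * c * s := by
      rw [← hcs]; ring
    linarith
  rw [enormAinv, enormAinv]
  apply Real.sqrt_le_sqrt
  rw [key]
  linarith
end

section
/- Let A ∈ ℝ^{n×n} be symmetric with eigenvalues in (0,2) and b ∈ ℝ^n, with f(x) = -(Ax - b) and g(x) = x + f(x). For any x̄, ȳ ∈ ℝ^n and any β ∈ ℝ, define x⁰ = x̄ + β(ȳ - x̄) and x¹ = g(x̄) + β(g(ȳ) - g(x̄)). If f(x⁰) ≠ 0, then ‖f(x¹)‖₂ < ‖f(x⁰)‖₂. -/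
open Matrix

noncomputable def enorm {n : ℕ} (v : Fin n → ℝ) : ℝ := Real.sqrt (v ⬝ᵥ v)

/-! Because `f` is affine it commutes with affine combinations, so `x1 = x0 + f x0` is a
Richardson step from `x0` and `f x1 = (1 - A) (f x0)`. In an orthonormal eigenbasis of `A`,
`1 - A` multiplies the `i`-th coordinate by `1 - λᵢ ∈ (-1, 1)`, which strictly shrinks every
nonzero vector. -/

lemma enorm_eq_norm_toLp {n : ℕ} (v : Fin n → ℝ) : _root_.enorm v = ‖WithLp.toLp 2 v‖ := by
  rw [_root_.enorm, EuclideanSpace.norm_eq]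
  simp only [Real.norm_eq_abs, sq_abs, dotProduct, ← sq]

lemma EuclideanSpace.norm_lt_norm_of_apply_eq_mul {ι : Type*} [Fintype ι]
    {x y : EuclideanSpace ℝ ι} {d : ι → ℝ} (hd : ∀ i, |d i| < 1) (hxy : ∀ i, x i = d i * y i)
    (hy : y ≠ 0) : ‖x‖ < ‖y‖ := by
  obtain ⟨j, hj⟩ : ∃ j, y j ≠ 0 := by
    by_contra! h
    exact hy (PiLp.ext h)
  have hsq (i : ι) : ‖x i‖ ^ 2 = d i ^ 2 * ‖y i‖ ^ 2 := by
    rw [hxy, norm_mul, mul_pow, Real.norm_eq_abs (d i), sq_abs]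
  have hd_sq (i : ι) : d i ^ 2 < 1 := (sq_lt_one_iff_abs_lt_one (d i)).2 (hd i)
  rw [EuclideanSpace.norm_eq, EuclideanSpace.norm_eq]
  refine Real.sqrt_lt_sqrt (by positivity) (Finset.sum_lt_sum (fun i _ => ?_) ⟨j, by simp, ?_⟩)
  · rw [hsq]
    exact mul_le_of_le_one_left (by positivity) (hd_sq i).le
  · rw [hsq]
    exact mul_lt_of_lt_one_left (by positivity) (hd_sq j)

namespace Matrix.IsHermitian

variable {n : Type*} [Fintype n] [DecidableEq n] {A : Matrix n n ℝ}

lemma eigenvectorBasis_repr_mulVec (hA : A.IsHermitian) (v : n → ℝ) (i : n) :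
    hA.eigenvectorBasis.repr (WithLp.toLp 2 (A *ᵥ v)) i =
      hA.eigenvalues i * hA.eigenvectorBasis.repr (WithLp.toLp 2 v) i := by
  rw [OrthonormalBasis.repr_apply_apply, OrthonormalBasis.repr_apply_apply, ← real_inner_smul_left]
  calc inner ℝ (hA.eigenvectorBasis i) (WithLp.toLp 2 (A *ᵥ v))
      = inner ℝ (toEuclideanLin A (hA.eigenvectorBasis i)) (WithLp.toLp 2 v) :=
        (isSymmetric_toEuclideanLin_iff.mpr hA _ _).symm
    _ = inner ℝ (hA.eigenvalues i • hA.eigenvectorBasis i) (WithLp.toLp 2 v) := by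
        rw [toLpLin_apply, hA.mulVec_eigenvectorBasis]
        rfl

lemma norm_sub_mulVec_lt (hA : A.IsHermitian) (hev : ∀ i, hA.eigenvalues i ∈ Set.Ioo 0 2)
    {v : n → ℝ} (hv : v ≠ 0) : ‖WithLp.toLp 2 (v - A *ᵥ v)‖ < ‖WithLp.toLp 2 v‖ := by
  rw [← hA.eigenvectorBasis.repr.norm_map, ← hA.eigenvectorBasis.repr.norm_map (WithLp.toLp 2 v)]
  refine EuclideanSpace.norm_lt_norm_of_apply_eq_mul (d := fun i => 1 - hA.eigenvalues i)
    (fun i => ?_) (fun i => ?_) (by simpa using hv)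
  · rw [abs_sub_lt_iff]
    constructor <;> linarith [(hev i).1, (hev i).2]
  · rw [WithLp.toLp_sub, map_sub, PiLp.sub_apply, eigenvectorBasis_repr_mulVec]
    ring

end Matrix.IsHermitian

section AffineResidual

variable {m : Type*} [Fintype m] {A : Matrix m m ℝ} {b : m → ℝ} {f : (m → ℝ) → m → ℝ}

lemma residual_add (hf : ∀ x, f x = -(A *ᵥ x - b)) (x v : m → ℝ) :
    f (x + v) = f x - A *ᵥ v := by
  rw [hf, hf, mulVec_add]
  abel

lemma residual_add_smul_sub (hf : ∀ x, f x = -(A *ᵥ x - b)) (x y : m → ℝ) (β : ℝ) :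
    f (x + β • (y - x)) = f x + β • (f y - f x) := by
  rw [residual_add hf, hf, hf, mulVec_smul, mulVec_sub]
  module

lemma fixedPoint_add_smul_sub_eq_add_residual {g : (m → ℝ) → m → ℝ}
    (hf : ∀ x, f x = -(A *ᵥ x - b)) (hg : ∀ x, g x = x + f x) (x y : m → ℝ) (β : ℝ) :
    g x + β • (g y - g x) = x + β • (y - x) + f (x + β • (y - x)) := by
  rw [hg, hg, residual_add_smul_sub hf]
  module

end AffineResidual

theorem stmt_9 {n : ℕ} (A : Matrix (Fin n) (Fin n) ℝ) (hA : A.IsHermitian)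
    (hev : ∀ i, hA.eigenvalues i ∈ Set.Ioo (0:ℝ) 2)
    (b : Fin n → ℝ)
    (f g : (Fin n → ℝ) → (Fin n → ℝ))
    (hf : ∀ x, f x = -(A.mulVec x - b))
    (hg : ∀ x, g x = x + f x)
    (xb yb : Fin n → ℝ) (β : ℝ)
    (x0 x1 : Fin n → ℝ)
    (hx0 : x0 = xb + β • (yb - xb))
    (hx1 : x1 = g xb + β • (g yb - g xb))
    (hne : f x0 ≠ 0) :
    _root_.enorm (f x1) < _root_.enorm (f x0) := by
  have hfx1 : f x1 = f x0 - A *ᵥ f x0 := by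
    rw [hx1, fixedPoint_add_smul_sub_eq_add_residual hf hg, ← hx0, residual_add hf]
  rw [hfx1, enorm_eq_norm_toLp, enorm_eq_norm_toLp]
  exact hA.norm_sub_mulVec_lt hev hne
end
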